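/- arXiv:1906.07988 — 6 statements merged into one kernel-verified Lean document; each statement's English description precedes it below -/
import Mathlib

section
/- Let (X, x₀, T) be a pointed minimal flow with Ellis group A, and let h ∈ G be such that the assignment p x₀ ↦ p h x₀ (p ∈ M) is a well-defined map φ_h : X → X. Then h⁻¹ A h ⊆ A and φ_h is a continuous T-equivariant endomorphism of (X,T). -/
/- STATEMENT 2: Let (X, x₀, T) be a pointed minimal flow with Ellis group A, and let h ∈ G be
such that the assignment p • x₀ ↦ p • (h • x₀) (p ∈ M) is a well-defined map φ_h : X → X.
Then h⁻¹ A h ⊆ A and φ_h is a continuous T-equivariant endomorphism of (X,T).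

Setup: E plays the role of the compact enveloping semigroup (βT), with continuous evaluation
maps p ↦ p • x; G is the Ellis group uM mapped into E via ι (ι 1 = u, the idempotent fixing
x₀); minimality gives X = E • x₀; well-definedness is the hypothesis hwd. -/
theorem stmt2 {T E G X : Type*} [Group T] [Monoid E] [Group G]
    [TopologicalSpace X] [CompactSpace X] [T2Space X]
    [TopologicalSpace E] [CompactSpace E]
    [MulAction T X] [MulAction E X] [MulAction G X]
    (j : T →* E) (hj : ∀ (t : T) (x : X), j t • x = t • x)
    (ι : G → E) (hιmul : ∀ g g' : G, ι (g * g') = ι g * ι g')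
    (hιact : ∀ (g : G) (x : X), ι g • x = g • x)
    (u : E) (hι1 : ι 1 = u) (hu : u * u = u)
    (x₀ : X) (hux₀ : u • x₀ = x₀)
    (hmin : ∀ x : X, ∃ p : E, p • x₀ = x)
    (heval : ∀ x : X, Continuous fun p : E => p • x)
    (h : G)
    (hwd : ∀ p q : E, p • x₀ = q • x₀ → p • (h • x₀) = q • (h • x₀)) :
    (∀ a : G, a • x₀ = x₀ → (h⁻¹ * a * h) • x₀ = x₀) ∧
    ∃ φ : X → X, Continuous φ ∧ (∀ p : E, φ (p • x₀) = p • (h • x₀)) ∧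
      ∀ (t : T) (x : X), φ (t • x) = t • φ x := by

  constructor
  · intro a ha
    have h1 : ι a • x₀ = u • x₀ := by
      rw [hιact, ha, hux₀]
    have h2 := hwd (ι a) u h1
    have h3 : u • (h • x₀) = h • x₀ := by
      rw [← hιact h x₀, ← hι1, ← mul_smul, ← hιmul, one_mul]
    rw [hιact, h3] at h2
    rw [mul_smul, mul_smul, h2, inv_smul_smul]
  · set φ : X → X := fun x => (hmin x).choose • (h • x₀) with hφ
    have key : ∀ p : E, φ (p • x₀) = p • (h • x₀) := by
      intro p
      exact hwd _ p (hmin (p • x₀)).choose_spec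
    have hπ : ∀ x : X, (hmin x).choose • x₀ = x := fun x => (hmin x).choose_spec
    refine ⟨φ, ?_, key, ?_⟩
    · have hqm : Topology.IsQuotientMap (fun p : E => p • x₀) := by
        refine ((heval x₀).isClosedMap.isQuotientMap (heval x₀) ?_)
        intro x; exact hmin x
      rw [hqm.continuous_iff]
      have : (φ ∘ fun p : E => p • x₀) = fun p : E => p • (h • x₀) := by
        funext p; exact key p
      rw [this]
      exact heval (h • x₀)
    · intro t x
      obtain ⟨p, hp⟩ := hmin x
      have : t • x = (j t * p) • x₀ := by
        rw [mul_smul, hp, hj]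
      rw [this, key, ← hp, key, mul_smul, hj]
end

section
/- Let (X, x₀, T) be a pointed minimal flow with Ellis group A and let h ∈ G. If both maps φ_h(p x₀) = p h x₀ and φ_{h⁻¹}(p x₀) = p h⁻¹ x₀ are well defined on X, then h ∈ N_G(A) and φ_h is an automorphism of (X,T) with inverse φ_{h⁻¹}. -/
/- STATEMENT 3: Let (X, x₀, T) be a pointed minimal flow with Ellis group A and let h ∈ G.
If both maps φ_h(p • x₀) = p • (h • x₀) and φ_{h⁻¹}(p • x₀) = p • (h⁻¹ • x₀) are well defined
on X, then h ∈ N_G(A) (i.e. h⁻¹ A h = A) and φ_h is an automorphism of (X,T)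
(a T-equivariant homeomorphism) with inverse φ_{h⁻¹}.

Setup: E is the compact enveloping semigroup (βT) acting on X with continuous evaluations;
G is the Ellis group uM mapped into E via ι; minimality: X = E • x₀. -/
theorem stmt3 {T E G X : Type*} [Group T] [Monoid E] [Group G]
    [TopologicalSpace X] [CompactSpace X] [T2Space X]
    [TopologicalSpace E] [CompactSpace E]
    [MulAction T X] [MulAction E X] [MulAction G X]
    (j : T →* E) (hj : ∀ (t : T) (x : X), j t • x = t • x)
    (ι : G → E) (hιmul : ∀ g g' : G, ι (g * g') = ι g * ι g')
    (hιact : ∀ (g : G) (x : X), ι g • x = g • x)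
    (u : E) (hι1 : ι 1 = u) (hu : u * u = u)
    (x₀ : X) (hux₀ : u • x₀ = x₀)
    (hmin : ∀ x : X, ∃ p : E, p • x₀ = x)
    (heval : ∀ x : X, Continuous fun p : E => p • x)
    (h : G)
    (hwd : ∀ p q : E, p • x₀ = q • x₀ → p • (h • x₀) = q • (h • x₀))
    (hwd' : ∀ p q : E, p • x₀ = q • x₀ → p • (h⁻¹ • x₀) = q • (h⁻¹ • x₀)) :
    (∀ a : G, a • x₀ = x₀ ↔ (h⁻¹ * a * h) • x₀ = x₀) ∧
    ∃ φ : X ≃ₜ X, (∀ p : E, φ (p • x₀) = p • (h • x₀)) ∧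
      (∀ p : E, φ.symm (p • x₀) = p • (h⁻¹ • x₀)) ∧
      ∀ (t : T) (x : X), φ (t • x) = t • φ x := by
  classical
  have hsmulG : ∀ (p : E) (g : G), p • (g • x₀) = (p * ι g) • x₀ := by
    intro p g; rw [← hιact, ← mul_smul]
  have hfix : ∀ k : G, u • (k • x₀) = k • x₀ := by
    intro k
    rw [hsmulG, ← hι1, ← hιmul, one_mul, hιact]
  have key : ∀ (k : G), (∀ p q : E, p • x₀ = q • x₀ → p • (k • x₀) = q • (k • x₀)) →
      ∀ a : G, a • x₀ = x₀ → (k⁻¹ * a * k) • x₀ = x₀ := by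
    intro k hk a ha
    have h1 : ι a • x₀ = u • x₀ := by rw [hιact, ha, hux₀]
    have h2 : ι a • (k • x₀) = u • (k • x₀) := hk _ _ h1
    calc (k⁻¹ * a * k) • x₀ = ι (k⁻¹ * a * k) • x₀ := (hιact _ _).symm
      _ = (ι k⁻¹ * (ι a * ι k)) • x₀ := by rw [hιmul, hιmul, mul_assoc]
      _ = ι k⁻¹ • (ι a • (ι k • x₀)) := by rw [mul_smul, mul_smul]
      _ = ι k⁻¹ • (k • x₀) := by rw [hιact k, h2, hfix]
      _ = (ι k⁻¹ * ι k) • x₀ := by rw [← hιact k, mul_smul]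
      _ = x₀ := by rw [← hιmul, inv_mul_cancel, hι1, hux₀]
  constructor
  · intro a
    constructor
    · exact key h hwd a
    · intro ha
      have := key h⁻¹ hwd' (h⁻¹ * a * h) ha
      rw [inv_inv] at this
      convert this using 2
      group
  · -- construct φ
    choose s hs using hmin
    set φf : X → X := fun x => s x • (h • x₀) with hφf
    set ψf : X → X := fun x => s x • (h⁻¹ • x₀) with hψf
    have hφp : ∀ p : E, φf (p • x₀) = p • (h • x₀) := fun p => hwd _ _ (hs _)
    have hψp : ∀ p : E, ψf (p • x₀) = p • (h⁻¹ • x₀) := fun p => hwd' _ _ (hs _)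
    have hcancel : ∀ (k : G) (p : E), (p * ι k * ι k⁻¹) • x₀ = p • x₀ := by
      intro k p
      rw [mul_assoc, ← hιmul, mul_inv_cancel, hι1, mul_smul, hux₀]
    have hψφ : ∀ x, ψf (φf x) = x := by
      intro x
      have : φf x = (s x * ι h) • x₀ := by rw [hφf]; simp only []; rw [hsmulG]
      rw [this, hψp, hsmulG, hcancel, hs]
    have hφψ : ∀ x, φf (ψf x) = x := by
      intro x
      have : ψf x = (s x * ι h⁻¹) • x₀ := by rw [hψf]; simp only []; rw [hsmulG]
      rw [this, hφp, hsmulG]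
      have := hcancel h⁻¹ (s x)
      rw [inv_inv] at this
      rw [this, hs]
    -- continuity via quotient map
    have hq : Topology.IsQuotientMap (fun p : E => p • x₀) := by
      refine ((heval x₀).isClosedMap.isQuotientMap (heval x₀) ?_)
      intro x
      exact ⟨s x, hs x⟩
    have hφc : Continuous φf := by
      rw [hq.continuous_iff]
      have : (φf ∘ fun p : E => p • x₀) = fun p : E => p • (h • x₀) := funext hφp
      rw [this]; exact heval _
    have hψc : Continuous ψf := by
      rw [hq.continuous_iff]
      have : (ψf ∘ fun p : E => p • x₀) = fun p : E => p • (h⁻¹ • x₀) := funext hψp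
      rw [this]; exact heval _
    refine ⟨⟨⟨φf, ψf, hψφ, hφψ⟩, hφc, hψc⟩, hφp, hψp, ?_⟩
    intro t x
    have hx : x = s x • x₀ := (hs x).symm
    calc φf (t • x) = φf (j t • (s x • x₀)) := by rw [hj, ← hx]
      _ = φf ((j t * s x) • x₀) := by rw [mul_smul]
      _ = (j t * s x) • (h • x₀) := hφp _
      _ = j t • (s x • (h • x₀)) := by rw [mul_smul]
      _ = t • φf x := by rw [hj]
end

section
/- Every minimal distal flow is semi-regular: for every h ∈ N_G(A), the map φ_h : X → X given by φ_h(p x₀) = p h x₀ is a well-defined automorphism of (X,T). -/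
/-- A map into a compact Hausdorff space with closed graph is continuous. -/
lemma continuous_of_closed_graph' {X Y : Type*} [TopologicalSpace X] [TopologicalSpace Y]
    [CompactSpace Y] [T2Space Y] {f : X → Y}
    (hg : IsClosed {p : X × Y | p.2 = f p.1}) : Continuous f := by
  rw [continuous_iff_isClosed]
  intro C hC
  have : f ⁻¹' C = Prod.fst '' ({p : X × Y | p.2 = f p.1} ∩ (Set.univ ×ˢ C)) := by
    ext x
    constructor
    · intro hx; exact ⟨(x, f x), ⟨rfl, ⟨trivial, hx⟩⟩, rfl⟩
    · rintro ⟨⟨a, b⟩, ⟨heq, -, hb⟩, rfl⟩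
      rw [Set.mem_preimage, ← heq]; exact hb
  rw [this]
  exact isClosedMap_fst_of_compactSpace _ (hg.inter (isClosed_univ.prod hC))

section Aux
variable {G X : Type*} [Group G] [TopologicalSpace X] [CompactSpace X] [T2Space X]
  [TopologicalSpace G] [CompactSpace G] [MulAction G X]

/-- well-definedness for any element of the normalizer -/
lemma wd (x₀ : X) {h : G} (hN : h ∈ Subgroup.normalizer (MulAction.stabilizer G x₀ : Set G))
    (p q : G) (hpq : p • x₀ = q • x₀) : p • (h • x₀) = q • (h • x₀) := by
  have ha : q⁻¹ * p ∈ MulAction.stabilizer G x₀ := by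
    rw [MulAction.mem_stabilizer_iff, mul_smul, hpq, inv_smul_smul]
  have hb : h⁻¹ * (q⁻¹ * p) * h ∈ MulAction.stabilizer G x₀ := by
    have := (Subgroup.mem_normalizer_iff.mp (inv_mem hN) (q⁻¹ * p)).mp ha
    simpa using this
  have : (h⁻¹ * (q⁻¹ * p) * h) • x₀ = x₀ := hb
  calc p • (h • x₀) = q • (h * (h⁻¹ * (q⁻¹ * p) * h)) • x₀ := by
        rw [← mul_smul, ← mul_smul]; congr 1; group
    _ = q • (h • x₀) := by rw [mul_smul, this]

/-- the raw map φ -/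
noncomputable def phi (x₀ : X) (htrans : ∀ x : X, ∃ g : G, g • x₀ = x) (h : G) (x : X) : X :=
  (Classical.choose (htrans x)) • (h • x₀)

lemma phi_spec (x₀ : X) (htrans : ∀ x : X, ∃ g : G, g • x₀ = x) {h : G}
    (hN : h ∈ Subgroup.normalizer (MulAction.stabilizer G x₀ : Set G)) (p : G) :
    phi x₀ htrans h (p • x₀) = p • (h • x₀) :=
  wd x₀ hN _ p (Classical.choose_spec (htrans (p • x₀)))

lemma phi_cont (heval : ∀ x : X, Continuous fun g : G => g • x)
    (x₀ : X) (htrans : ∀ x : X, ∃ g : G, g • x₀ = x) {h : G}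
    (hN : h ∈ Subgroup.normalizer (MulAction.stabilizer G x₀ : Set G)) :
    Continuous (phi x₀ htrans h) := by
  apply continuous_of_closed_graph'
  have : {p : X × X | p.2 = phi x₀ htrans h p.1}
      = (fun g : G => (g • x₀, g • (h • x₀))) '' Set.univ := by
    ext ⟨x, y⟩
    simp only [Set.mem_setOf_eq, Set.image_univ, Set.mem_range]
    constructor
    · rintro rfl
      exact ⟨Classical.choose (htrans x), by
        rw [Classical.choose_spec (htrans x)]; rfl⟩
    · rintro ⟨g, hg⟩
      obtain ⟨h1, h2⟩ := Prod.mk.injEq .. ▸ hg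
      rw [← h1, ← h2, phi_spec x₀ htrans hN]
  rw [this]
  exact (isCompact_univ.image ((heval x₀).prodMk (heval (h • x₀)))).isClosed

end Aux

theorem stmt5 {T G X : Type*} [Group T] [Group G]
    [TopologicalSpace X] [CompactSpace X] [T2Space X]
    [TopologicalSpace G] [CompactSpace G]
    [MulAction T X] [MulAction G X]
    (heval : ∀ x : X, Continuous fun g : G => g • x)
    (hcompat : ∀ t : T, ∃ g : G, ∀ x : X, g • x = t • x)
    (x₀ : X) (htrans : ∀ x : X, ∃ g : G, g • x₀ = x)
    (h : G) (hN : h ∈ Subgroup.normalizer (MulAction.stabilizer G x₀ : Set G)) :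
    (∀ p q : G, p • x₀ = q • x₀ → p • (h • x₀) = q • (h • x₀)) ∧
    ∃ φ : X ≃ₜ X, (∀ p : G, φ (p • x₀) = p • (h • x₀)) ∧
      ∀ (t : T) (x : X), φ (t • x) = t • φ x := by
  refine ⟨fun p q => wd x₀ hN p q, ?_⟩
  have hN' : h⁻¹ ∈ Subgroup.normalizer (MulAction.stabilizer G x₀ : Set G) := inv_mem hN
  set f := phi x₀ htrans h with hf
  set f' := phi x₀ htrans h⁻¹ with hf'
  have key : ∀ (k : G) x, ∃ g : G, x = g • x₀ := fun k x =>
    ⟨Classical.choose (htrans x), (Classical.choose_spec (htrans x)).symm⟩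
  have hinv1 : ∀ x, f' (f x) = x := by
    intro x
    obtain ⟨g, rfl⟩ := key h x
    rw [hf, hf', phi_spec x₀ htrans hN, ← mul_smul, phi_spec x₀ htrans hN',
      mul_smul, smul_inv_smul]
  have hinv2 : ∀ x, f (f' x) = x := by
    intro x
    obtain ⟨g, rfl⟩ := key h x
    rw [hf, hf', phi_spec x₀ htrans hN', ← mul_smul, phi_spec x₀ htrans hN,
      mul_smul, inv_smul_smul]
  refine ⟨⟨⟨f, f', hinv1, hinv2⟩, phi_cont heval x₀ htrans hN,
    phi_cont heval x₀ htrans hN'⟩, fun p => phi_spec x₀ htrans hN p, ?_⟩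
  intro t x
  obtain ⟨g, hg⟩ := hcompat t
  obtain ⟨q, rfl⟩ := key h x
  show f (t • (q • x₀)) = t • f (q • x₀)
  rw [← hg, ← mul_smul, hf, phi_spec x₀ htrans hN, phi_spec x₀ htrans hN,
    mul_smul, hg]
end

section
/- A minimal point-distal regular flow is distal: if (X,T) is a minimal flow containing a distal point x₀ and for every x ∈ X there is an automorphism ψ of (X,T) such that ψ(x) is proximal to x₀, then every point of X is distal. -/
/- Two points x, y of a flow are proximal if some net tᵢ ∈ T has lim tᵢ x = lim tᵢ y;
equivalently the closure of the T-orbit of (x,y) in X × X meets the diagonal. -/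
def Proximal (T : Type*) {X : Type*} [SMul T X] [TopologicalSpace X] (x y : X) : Prop :=
  ∃ z : X, (z, z) ∈ closure {q : X × X | ∃ t : T, q = (t • x, t • y)}

/- STATEMENT 7: A minimal point-distal regular flow is distal: if (X,T) is a minimal flow
containing a distal point x₀ (a point proximal only to itself) and for every x ∈ X there is an
automorphism ψ of (X,T) (a T-equivariant homeomorphism) such that ψ(x) is proximal to x₀,
then every point of X is distal. -/
theorem stmt7 {T X : Type*} [Group T] [TopologicalSpace X] [CompactSpace X] [T2Space X]
    [MulAction T X] [ContinuousConstSMul T X]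
    (hmin : ∀ x : X, Dense (MulAction.orbit T x))
    (x₀ : X) (hdistal : ∀ y : X, Proximal T x₀ y → y = x₀)
    (hreg : ∀ x : X, ∃ ψ : X ≃ₜ X, (∀ (t : T) (z : X), ψ (t • z) = t • ψ z) ∧
      Proximal T (ψ x) x₀) :
    ∀ x y : X, Proximal T x y → y = x := by
  have symm : ∀ a b : X, Proximal T a b → Proximal T b a := by
    rintro a b ⟨z, hz⟩
    have h := map_mem_closure (t := {q : X × X | ∃ t : T, q = (t • b, t • a)})
      continuous_swap hz (by rintro q ⟨t, rfl⟩; exact ⟨t, rfl⟩)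
    exact ⟨z, h⟩
  have hmap : ∀ (ψ : X ≃ₜ X), (∀ (t : T) (z : X), ψ (t • z) = t • ψ z) →
      ∀ a b : X, Proximal T a b → Proximal T (ψ a) (ψ b) := by
    rintro ψ hψ a b ⟨z, hz⟩
    have h := map_mem_closure (t := {q : X × X | ∃ t : T, q = (t • ψ a, t • ψ b)})
      (ψ.continuous.prodMap ψ.continuous) hz
      (by rintro q ⟨t, rfl⟩; exact ⟨t, by simp [Prod.map, hψ]⟩)
    exact ⟨ψ z, h⟩
  intro x y hxy
  obtain ⟨ψ, hψ, hpx⟩ := hreg x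
  have h1 : ψ x = x₀ := hdistal _ (symm _ _ hpx)
  have h2 : ψ y = x₀ := hdistal _ (by rw [← h1]; exact hmap ψ hψ x y hxy)
  exact ψ.injective (h2.trans h1.symm)
end

section
/- Let (X,x₀,T) be a pointed minimal flow with Ellis group A, Γ ≤ N_G(A) a subgroup, C = {h x₀ : h ∈ Γ} ⊆ X, and let z₀ ∈ X^C be defined by z₀(h x₀) = h x₀. Let Z be the orbit closure of z₀ in the product flow X^C. Then 𝔊(Z, z₀) = A, i.e. the projection Z → X onto the x₀-coordinate is a proximal extension. -/
/- The base point z₀ of the joining construction: z₀ ∈ X^Γ (with coordinates indexed by the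
subgroup Γ ≤ N_G(A), standing for the coordinate set C = {h • x₀ : h ∈ Γ}), defined by
z₀ γ = γ • x₀. Its orbit closure Z in the product flow X^Γ is the flow Z_Γ of the paper. -/
def joinPoint {G X : Type*} [Group G] [MulAction G X] (x₀ : X) (Γ : Subgroup G) :
    ↥Γ → X :=
  fun γ : Γ => (γ : G) • x₀

/- STATEMENT 11: Let (X,x₀,T) be a pointed minimal flow with Ellis group A = 𝔊(X,x₀)
(= the stabilizer of x₀ in the Ellis group G), Γ ≤ N_G(A) a subgroup, and let
z₀ ∈ X^C, z₀(h x₀) = h x₀, be the base point of the orbit closure Z ⊆ X^C.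
Then 𝔊(Z,z₀) = A: the stabilizer in G of the point z₀ (for the diagonal/product action of G
on X^Γ) equals the stabilizer A of x₀; i.e. the projection Z → X onto the x₀-coordinate is a
proximal extension (a homomorphism of pointed minimal flows with equal Ellis groups). -/
theorem stmt11 {G X : Type*} [Group G] [MulAction G X] (x₀ : X)
    (Γ : Subgroup G) (hΓ : Γ ≤ Subgroup.normalizer (MulAction.stabilizer G x₀ : Set G)) :
    MulAction.stabilizer G (joinPoint x₀ Γ) = MulAction.stabilizer G x₀ := by
  ext g
  simp only [MulAction.mem_stabilizer_iff]
  constructor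
  · intro h
    have := congrFun h (1 : Γ)
    simpa [joinPoint] using this
  · intro hg
    funext γ
    have hmem : (γ : G)⁻¹ * g * (γ : G) ∈ MulAction.stabilizer G x₀ := by
      have := (Subgroup.mem_normalizer_iff.mp (hΓ (Γ.inv_mem γ.2)) g).mp ?_
      · simpa [mul_assoc] using this
      · simpa [MulAction.mem_stabilizer_iff] using hg
    have hx : ((γ : G)⁻¹ * g * (γ : G)) • x₀ = x₀ := hmem
    show g • (γ : G) • x₀ = (γ : G) • x₀
    calc g • (γ : G) • x₀ = (γ : G) • ((γ : G)⁻¹ * g * (γ : G)) • x₀ := by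
          simp [mul_smul]
      _ = (γ : G) • x₀ := by rw [hx]
end

section
/- Let π : (X,x₀,T) → (Y,y₀,T) be a homomorphism of pointed minimal flows that is an isometric (equicontinuous) factor map onto an equicontinuous flow Y, let W be the orbit closure of (x₀, x) for some x ∈ uX. Then for every (a,b) ∈ W, the fiber W[a] = {c ∈ X : (a,c) ∈ W} is contained in π⁻¹(π(b)). -/
/- STATEMENT 19: Let π : (X,x₀,T) → (Y,y₀,T) be a homomorphism of pointed minimal flows onto
an equicontinuous flow Y, and let W be the orbit closure of (x₀, x) in X × X for some
x ∈ uX. Then for every (a,b) ∈ W, the fiber W[a] = {c : (a,c) ∈ W} is contained in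
π⁻¹(π b).

Setup: E plays the role of the enveloping semigroup E(X,T) (equivalently βT): a compact
monoid acting on X and Y with continuous evaluations, with T densely embedded via j and
acting through j; π is a continuous equivariant surjection (equivariant also for E).
Equicontinuity of Y is used in the form hequi: if p, q ∈ E agree at π x₀ then they agree on
all of Y (E acts on Y through a group of isometries). The hypothesis x ∈ uX is u • x = x for
the idempotent u with u • x₀ = x₀. -/
theorem stmt19 {T E X Y : Type*} [Group T] [Monoid E]
    [TopologicalSpace X] [CompactSpace X] [T2Space X]
    [TopologicalSpace Y] [CompactSpace Y] [T2Space Y]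
    [TopologicalSpace E] [CompactSpace E]
    [MulAction T X] [MulAction E X] [MulAction T Y] [MulAction E Y]
    (j : T →* E) (hjX : ∀ (t : T) (x : X), j t • x = t • x)
    (hjY : ∀ (t : T) (y : Y), j t • y = t • y)
    (hdense : DenseRange fun t : T => j t)
    (hevalX : ∀ x : X, Continuous fun p : E => p • x)
    (x₀ x : X) (u : E) (hu : u * u = u) (hux₀ : u • x₀ = x₀) (hux : u • x = x)
    (π : X → Y) (hπcont : Continuous π) (hπsurj : Function.Surjective π)
    (hπE : ∀ (p : E) (z : X), π (p • z) = p • π z)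
    (hequi : ∀ p q : E, p • π x₀ = q • π x₀ → ∀ y : Y, p • y = q • y) :
    ∀ a b c : X, (a, b) ∈ closure (MulAction.orbit T (x₀, x)) →
      (a, c) ∈ closure (MulAction.orbit T (x₀, x)) → π c = π b := by
  intro a b c hab hac
  have hf : Continuous fun p : E => ((p • x₀, p • x) : X × X) :=
    (hevalX x₀).prodMk (hevalX x)
  have hclosed : IsClosed (Set.range fun p : E => ((p • x₀, p • x) : X × X)) :=
    (isCompact_range hf).isClosed
  have hsub : closure (MulAction.orbit T (x₀, x)) ⊆
      Set.range fun p : E => ((p • x₀, p • x) : X × X) := by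
    apply closure_minimal _ hclosed
    rintro _ ⟨t, rfl⟩
    exact ⟨j t, by simp [hjX, Prod.smul_mk]⟩
  obtain ⟨p, hp⟩ := hsub hab
  obtain ⟨q, hq⟩ := hsub hac
  obtain ⟨hp1, hp2⟩ := Prod.mk.injEq .. ▸ hp
  obtain ⟨hq1, hq2⟩ := Prod.mk.injEq .. ▸ hq
  have h0 : p • π x₀ = q • π x₀ := by
    rw [← hπE, ← hπE, hp1, hq1]
  have := hequi p q h0 (π x)
  rw [← hp2, ← hq2, hπE, hπE, this]
end
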